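/- arXiv:1506.03464 — 2 statements merged into one kernel-verified Lean document; each statement's English description precedes it below -/
import Mathlib

section
/- Let k ≥ 2, σ ∈ {+,−}^k and n ≥ 1. If π ∈ S_n satisfies π_n = n, ĥπ* ∈ C^{σ,*}, and condition (†), then π ∈ A_n(Σ_σ). -/
/-- Infinite words over the alphabet `{0,…,k-1}`; `s i` is the letter `s_{i+1}`. -/
abbrev Word (k : ℕ) := ℕ → Fin k

/-- The number of indices `i < j` (0-indexed) with `σ_{s_i} = −` (`false` encodes `−`). -/
def negCount {k : ℕ} (σ : Fin k → Bool) (s : Word k) (j : ℕ) : ℕ :=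
  ((Finset.range j).filter (fun i => σ (s i) = false)).card

/-- The strict order `s ≺_σ t` on infinite words. -/
def sLt {k : ℕ} (σ : Fin k → Bool) (s t : Word k) : Prop :=
  ∃ j : ℕ, (∀ i < j, s i = t i) ∧ s j ≠ t j ∧
    ((Even (negCount σ s j) ∧ s j < t j) ∨ (¬ Even (negCount σ s j) ∧ t j < s j))

/-- `shiftW s i` is the word `s_{[i+1,∞)}`, i.e. the `i`-th iterate of the shift. -/
def shiftW {k : ℕ} (s : Word k) (i : ℕ) : Word k := fun m => s (m + i)

/-- `Pat(s, Σ_σ, n) = π`: the first `n` shifts of `s` are ordered according to `π`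
(0-indexed one-line notation). -/
def PatIs {k n : ℕ} (σ : Fin k → Bool) (s : Word k) (π : Equiv.Perm (Fin n)) : Prop :=
  ∀ i j : Fin n, π i < π j ↔ sLt σ (shiftW s i) (shiftW s j)

/-- The allowed patterns of length `n` of the signed shift `Σ_σ`. -/
def Allowed {k : ℕ} (σ : Fin k → Bool) (n : ℕ) : Set (Equiv.Perm (Fin n)) :=
  {π | ∃ s : Word k, PatIs σ s π}

/-- The starred cycle `ĥπ*` of `π`, as a partial map on 0-indexed positions:
position `π_i` carries value `π_{i+1}`, and position `π_n` carries `*` (i.e. `none`). -/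
def hatStar {n : ℕ} (π : Equiv.Perm (Fin n)) (p : Fin n) : Option (Fin n) :=
  if h : (π.symm p : ℕ) = n - 1 then none
  else some (π ⟨(π.symm p : ℕ) + 1, by have := (π.symm p).isLt; omega⟩)

/-- `e : ℕ → ℕ` (used on `{0,…,k}`) is a `*`-`σ`-segmentation of `ĥπ*`. -/
def IsStarSeg {k n : ℕ} (σ : Fin k → Bool) (π : Equiv.Perm (Fin n)) (e : ℕ → ℕ) : Prop :=
  e 0 = 0 ∧ e k = n ∧ Monotone e ∧
  -- (a) the non-`*` entries in the `t`-th block are increasing (σ_t = +) or decreasing (σ_t = −)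
  (∀ t : Fin k, ∀ p q : Fin n, e t ≤ (p : ℕ) → (q : ℕ) < e ((t : ℕ) + 1) → (p : ℕ) < (q : ℕ) →
    ∀ v w : Fin n, hatStar π p = some v → hatStar π q = some w →
      (if σ t = true then v < w else w < v)) ∧
  -- (b)
  (∀ (hk : 0 < k) (h0 : 0 < n) (h1 : 1 < n), σ ⟨0, hk⟩ = true →
     hatStar π ⟨0, h0⟩ = none → hatStar π ⟨1, h1⟩ = some ⟨0, h0⟩ → e 1 ≤ 1) ∧
  -- (c)
  (∀ (hk : k - 1 < k) (h0 : n - 2 < n) (h1 : n - 1 < n), σ ⟨k - 1, hk⟩ = true →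
     hatStar π ⟨n - 2, h0⟩ = some ⟨n - 1, h1⟩ → hatStar π ⟨n - 1, h1⟩ = none →
     n - 1 ≤ e (k - 1)) ∧
  -- (d)
  (∀ (hk0 : 0 < k) (hk1 : k - 1 < k) (h0 : 0 < n) (h1 : n - 2 < n) (h2 : n - 1 < n),
     σ ⟨0, hk0⟩ = false → σ ⟨k - 1, hk1⟩ = false →
     hatStar π ⟨0, h0⟩ = some ⟨n - 1, h2⟩ →
     hatStar π ⟨n - 2, h1⟩ = some ⟨0, h0⟩ → hatStar π ⟨n - 1, h2⟩ = none →
     e 1 = 0 ∨ n - 1 ≤ e (k - 1)) ∧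
  -- (e)
  (∀ (hk0 : 0 < k) (hk1 : k - 1 < k) (h0 : 0 < n) (h1 : 1 < n) (h2 : n - 1 < n),
     σ ⟨0, hk0⟩ = false → σ ⟨k - 1, hk1⟩ = false →
     hatStar π ⟨n - 1, h2⟩ = some ⟨0, h0⟩ →
     hatStar π ⟨0, h0⟩ = none → hatStar π ⟨1, h1⟩ = some ⟨n - 1, h2⟩ →
     e (k - 1) = n ∨ e 1 ≤ 1)

/-- `ĥπ* ∈ C^{σ,*}`: some `*`-`σ`-segmentation exists. -/
def InCstar {k n : ℕ} (σ : Fin k → Bool) (π : Equiv.Perm (Fin n)) : Prop :=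
  ∃ e : ℕ → ℕ, IsStarSeg σ π e

/-- The bad configuration forbidden by condition `(†)`: an integer `b ≥ 1` with `n − 2b ≥ 1`
such that `π_n` lies strictly between `π_{n−2b}` and `π_{n−b}`, and for all `1 ≤ i ≤ b` and
`0 ≤ t ≤ k−1`, `e_t < π_{n−b−i} ≤ e_{t+1}` iff `e_t < π_{n−i} ≤ e_{t+1}`.
(Values of `π` are 0-indexed, so `e_t < v ≤ e_{t+1}` becomes `e t ≤ v ∧ v < e (t+1)`.) -/
def DaggerBad (k : ℕ) {n : ℕ} (π : Equiv.Perm (Fin n)) (e : ℕ → ℕ) (b : ℕ) : Prop :=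
  ∃ (_ : 1 ≤ b) (hbn : 2 * b < n),
    (((π ⟨n - 1 - 2 * b, by omega⟩ : ℕ) < (π ⟨n - 1, by omega⟩ : ℕ) ∧
      (π ⟨n - 1, by omega⟩ : ℕ) < (π ⟨n - 1 - b, by omega⟩ : ℕ)) ∨
     ((π ⟨n - 1 - b, by omega⟩ : ℕ) < (π ⟨n - 1, by omega⟩ : ℕ) ∧
      (π ⟨n - 1, by omega⟩ : ℕ) < (π ⟨n - 1 - 2 * b, by omega⟩ : ℕ))) ∧
    (∀ i, 1 ≤ i → i ≤ b → ∀ t, t < k →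
      ((e t ≤ (π ⟨n - 1 - b - i, by omega⟩ : ℕ) ∧ (π ⟨n - 1 - b - i, by omega⟩ : ℕ) < e (t + 1)) ↔
       (e t ≤ (π ⟨n - 1 - i, by omega⟩ : ℕ) ∧ (π ⟨n - 1 - i, by omega⟩ : ℕ) < e (t + 1))))

/-- Condition `(†)`. -/
def Dagger {k n : ℕ} (σ : Fin k → Bool) (π : Equiv.Perm (Fin n)) : Prop :=
  ∃ e : ℕ → ℕ, IsStarSeg σ π e ∧ ∀ b : ℕ, ¬ DaggerBad k π e b

/-- The letter of the `π`-monotone word assigned to the (0-indexed) value `v`: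
the unique `t` with `e t ≤ v < e (t+1)` when `e` is a segmentation. -/
noncomputable def segLetter {k : ℕ} (hk : 0 < k) (e : ℕ → ℕ) (v : ℕ) : Fin k :=
  ⟨min (k - 1) (sInf {t : ℕ | v < e (t + 1)}),
   by have := Nat.min_le_left (k - 1) (sInf {t : ℕ | v < e (t + 1)}); omega⟩

/-- The `π`-monotone word `s_1 ⋯ s_n` associated to a segmentation `e`. -/
noncomputable def monoWord {k n : ℕ} (hk : 0 < k) (e : ℕ → ℕ) (π : Equiv.Perm (Fin n)) : List (Fin k) :=
  (List.finRange n).map (fun i => segLetter hk e (π i))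

/-- Prepend a finite word to an infinite word. -/
def appendW {k : ℕ} (l : List (Fin k)) (s : Word k) : Word k :=
  fun i => if h : i < l.length then l.get ⟨i, h⟩ else s (i - l.length)

/-- `n(q)`: number of negative letters of a finite word `q`. -/
def negCountL {k : ℕ} (σ : Fin k → Bool) (q : List (Fin k)) : ℕ :=
  (q.filter (fun c => σ c = false)).length

/-- The least word `w_σ` of `(W_k, ≺_σ)`. -/
def wMin {k : ℕ} (hk : 0 < k) (σ : Fin k → Bool) : Word k :=
  if σ ⟨0, hk⟩ = true then fun _ => ⟨0, hk⟩
  else if σ ⟨k - 1, by omega⟩ = true then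
    fun i => if i = 0 then ⟨0, hk⟩ else ⟨k - 1, by omega⟩
  else fun i => if i % 2 = 0 then ⟨0, hk⟩ else ⟨k - 1, by omega⟩

/-- The greatest word `W_σ` of `(W_k, ≺_σ)`. -/
def wMax {k : ℕ} (hk : 0 < k) (σ : Fin k → Bool) : Word k :=
  if σ ⟨k - 1, by omega⟩ = true then fun _ => ⟨k - 1, by omega⟩
  else if σ ⟨0, hk⟩ = true then
    fun i => if i = 0 then ⟨k - 1, by omega⟩ else ⟨0, hk⟩
  else fun i => if i % 2 = 0 then ⟨k - 1, by omega⟩ else ⟨0, hk⟩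

/-- A finite word is primitive if it is not a proper power of a shorter word. -/
def PrimitiveW {k : ℕ} (q : List (Fin k)) : Prop :=
  ¬ ∃ (r : List (Fin k)) (m : ℕ), r.length < q.length ∧ 1 < m ∧
      q = (List.replicate m r).flatten

/-- The word `s^{(1)}` (with `useMin = true`) resp. `s^{(2)}` (with `useMin = false`)
built from the `π`-monotone word of a segmentation `e` and a 0-indexed position `x0`:
`u p^{n−1}` followed by `w_σ`/`W_σ` according to the parities of `n` and `n(p)`. -/
noncomputable def buildWord {k n : ℕ} (hk : 0 < k) (σ : Fin k → Bool) (e : ℕ → ℕ)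
    (π : Equiv.Perm (Fin n)) (x0 : ℕ) (useMin : Bool) : Word k :=
  let w := monoWord hk e π
  let p := (w.take (n - 1)).drop x0
  let tail :=
    if n % 2 = 0 ∨ negCountL σ p % 2 = 0 then
      (if useMin then wMin hk σ else wMax hk σ)
    else
      (if useMin then wMax hk σ else wMin hk σ)
  appendW (w.take x0 ++ (List.replicate (n - 1) p).flatten) tail

/-- `ψ_k(t)`: the number of primitive words of length `t` over a `k`-letter alphabet. -/
noncomputable def psiW (k t : ℕ) : ℕ :=
  Set.ncard {q : List (Fin k) | q.length = t ∧ PrimitiveW q}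

/-- `a(n,k) = Σ_{t=1}^{n−1} ψ_k(t)·k^{n−t−1}`. -/
noncomputable def aNum (n k : ℕ) : ℕ :=
  ∑ t ∈ Finset.Icc 1 (n - 1), psiW k t * k ^ (n - t - 1)

/-- `I_{n,k} = a(n,k) + (k−2)k^{n−2}`, the number of allowed intervals of the `k`-shift. -/
noncomputable def INum (n k : ℕ) : ℕ := aNum n k + (k - 2) * k ^ (n - 2)

/-- The all-`+` signature, giving the `k`-shift. -/
def allPlus (k : ℕ) : Fin k → Bool := fun _ => true

/-- `b(n,2) = |A_n(Σ_2)|` and `b(n,i) = |A_n(Σ_i) \ A_n(Σ_{i−1})|` for `i ≥ 3`. -/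
noncomputable def bNum (n i : ℕ) : ℕ :=
  if i ≤ 2 then (Allowed (allPlus 2) n).ncard
  else ((Allowed (allPlus i) n) \ (Allowed (allPlus (i - 1)) n)).ncard

/-!
When `π_n = n` the last of the `n` shifts has to be the greatest word, so we take
`s = s_1 ⋯ s_{n-1} W_σ`, where `s_i` is the block of the segmentation containing `π_i` and `W_σ`
is the maximum of `(W_k, ≺_σ)`. Two shifts with equal first letters lie in one block, and the
monotonicity of `ĥπ*` on that block turns their comparison into the comparison of the next two
shifts; so every comparison comes down to one with the last shift `W_σ`. Such a comparison is
strict because no earlier shift equals `W_σ`: the periodic shape of `W_σ` would force `ĥπ*` to end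
in `n*` (for `σ_{k-1} = +`) or in the configuration of condition (d) (for `σ_0 = σ_{k-1} = −`),
and conditions (c) and (d) of the segmentation rule these out.
-/

namespace SignedShift

section Words

variable {k : ℕ} (σ : Fin k → Bool)

theorem negCount_congr {s t : Word k} {j : ℕ} (h : ∀ i < j, s i = t i) :
    negCount σ s j = negCount σ t j := by
  unfold negCount
  congr 1
  exact Finset.filter_congr fun i hi => by rw [h i (Finset.mem_range.mp hi)]

theorem negCount_succ (s : Word k) (j : ℕ) :
    negCount σ s (j + 1) = negCount σ s j + if σ (s j) = false then 1 else 0 := by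
  simp only [negCount, Finset.card_filter, Finset.sum_range_succ]

theorem negCount_succ' (s : Word k) (j : ℕ) :
    negCount σ s (j + 1) = (if σ (s 0) = false then 1 else 0) + negCount σ (shiftW s 1) j := by
  rw [negCount, negCount, Finset.card_filter, Finset.card_filter, Finset.sum_range_succ', add_comm]
  rfl

theorem shiftW_shiftW (s : Word k) (a b : ℕ) : shiftW (shiftW s a) b = shiftW s (a + b) :=
  funext fun m => congrArg s (by omega)

theorem appendW_apply_of_lt (l : List (Fin k)) (s : Word k) {i : ℕ} (hi : i < l.length) :
    appendW l s i = l[i] :=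
  dif_pos hi

theorem shiftW_appendW_length (l : List (Fin k)) (s : Word k) :
    shiftW (appendW l s) l.length = s :=
  funext fun m => by simp [shiftW, appendW]

theorem sLt_irrefl (s : Word k) : ¬ sLt σ s s :=
  fun ⟨_, _, hne, _⟩ => hne rfl

theorem sLt_asymm {s t : Word k} (hst : sLt σ s t) : ¬ sLt σ t s := by
  rintro ⟨j', hagree', hne', hcmp'⟩
  obtain ⟨j, hagree, hne, hcmp⟩ := hst
  obtain rfl : j = j' := by
    by_contra hjj
    rcases Nat.lt_or_gt_of_ne hjj with h | h
    · exact hne (hagree' j h).symm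
    · exact hne' (hagree j' h).symm
  rw [negCount_congr σ hagree'] at hcmp'
  rcases hcmp with ⟨he, hlt⟩ | ⟨he, hlt⟩ <;> rcases hcmp' with ⟨he', hlt'⟩ | ⟨he', hlt'⟩
  exacts [lt_asymm hlt hlt', he' he, he he', lt_asymm hlt hlt']

theorem patIs_of_forall_lt {n : ℕ} {s : Word k} {π : Equiv.Perm (Fin n)}
    (h : ∀ i j : Fin n, π i < π j → sLt σ (shiftW s i) (shiftW s j)) : PatIs σ s π := by
  refine fun i j => ⟨h i j, fun hij => ?_⟩
  rcases lt_trichotomy (π i) (π j) with hlt | heq | hgt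
  · exact hlt
  · rw [π.injective heq] at hij
    exact absurd hij (sLt_irrefl σ _)
  · exact absurd hij (sLt_asymm σ (h j i hgt))

theorem sLt_of_head_lt {s t : Word k} (h : s 0 < t 0) : sLt σ s t :=
  ⟨0, fun _ hi => absurd hi (Nat.not_lt_zero _), h.ne, Or.inl ⟨Even.zero, h⟩⟩

theorem sLt_of_head_eq_of_pos {s t : Word k} (h0 : s 0 = t 0) (hσ : σ (s 0) = true)
    (h : sLt σ (shiftW s 1) (shiftW t 1)) : sLt σ s t := by
  obtain ⟨j, hagree, hne, hcmp⟩ := h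
  refine ⟨j + 1, fun i hi => ?_, hne, ?_⟩
  · cases i with
    | zero => exact h0
    | succ i => exact hagree i (by omega)
  · simpa [negCount_succ', hσ, shiftW] using hcmp

theorem sLt_of_head_eq_of_neg {s t : Word k} (h0 : s 0 = t 0) (hσ : σ (s 0) = false)
    (h : sLt σ (shiftW t 1) (shiftW s 1)) : sLt σ s t := by
  obtain ⟨j, hagree, hne, hcmp⟩ := h
  refine ⟨j + 1, fun i hi => ?_, Ne.symm hne, ?_⟩
  · cases i with
    | zero => exact h0
    | succ i => exact (hagree i (by omega)).symm
  · rw [negCount_congr σ hagree] at hcmp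
    rw [negCount_succ', hσ, if_pos rfl, add_comm, Nat.even_add_one]
    change _ ∧ shiftW s 1 j < shiftW t 1 j ∨ _ ∧ shiftW t 1 j < shiftW s 1 j
    tauto

theorem sLt_of_forall_eq_ite (hk : 0 < k) {y : Word k}
    (hy : ∀ j, y j = if Even (negCount σ y j) then ⟨k - 1, by omega⟩ else ⟨0, hk⟩)
    {x : Word k} (hx : x ≠ y) : sLt σ x y := by
  classical
  have hdiff : ∃ j, x j ≠ y j := by
    by_contra h
    push Not at h
    exact hx (funext h)
  have hagree : ∀ i < Nat.find hdiff, x i = y i := fun i hi => not_not.mp (Nat.find_min hdiff hi)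
  refine ⟨Nat.find hdiff, hagree, Nat.find_spec hdiff, ?_⟩
  have hj := Nat.find_spec hdiff
  rw [negCount_congr σ hagree]
  rw [hy] at hj ⊢
  split_ifs at hj ⊢ with he
  · exact Or.inl ⟨he, lt_of_le_of_ne (Fin.le_def.mpr (Nat.le_sub_one_of_lt (x _).isLt)) hj⟩
  · exact Or.inr ⟨he, lt_of_le_of_ne (Fin.le_def.mpr (Nat.zero_le _)) (Ne.symm hj)⟩

theorem wMax_of_pos_last (hk : 0 < k) (htop : σ ⟨k - 1, by omega⟩ = true) :
    wMax hk σ = fun _ => ⟨k - 1, by omega⟩ :=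
  if_pos htop

theorem wMax_of_neg_last_of_pos_first (hk : 0 < k) (htop : ¬σ ⟨k - 1, by omega⟩ = true)
    (hbot : σ ⟨0, hk⟩ = true) :
    wMax hk σ = fun i => if i = 0 then ⟨k - 1, by omega⟩ else ⟨0, hk⟩ := by
  simp [wMax, htop, hbot]

theorem wMax_of_neg_last_of_neg_first (hk : 0 < k) (htop : ¬σ ⟨k - 1, by omega⟩ = true)
    (hbot : ¬σ ⟨0, hk⟩ = true) :
    wMax hk σ = fun i => if i % 2 = 0 then ⟨k - 1, by omega⟩ else ⟨0, hk⟩ := by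
  simp [wMax, htop, hbot]

theorem wMax_eq_ite (hk : 0 < k) (j : ℕ) :
    wMax hk σ j =
      if Even (negCount σ (wMax hk σ) j) then ⟨k - 1, by omega⟩ else ⟨0, hk⟩ := by
  by_cases htop : σ ⟨k - 1, by omega⟩ = true
  · have hW := wMax_of_pos_last σ hk htop
    have hcount : ∀ j, negCount σ (wMax hk σ) j = 0 := by
      intro j
      induction j with
      | zero => rfl
      | succ j ih => rw [negCount_succ, ih, hW]; simp [htop]
    rw [hcount, if_pos Even.zero, hW]
  by_cases hbot : σ ⟨0, hk⟩ = true
  · have hW := wMax_of_neg_last_of_pos_first σ hk htop hbot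
    have hcount : ∀ j, negCount σ (wMax hk σ) j = if j = 0 then 0 else 1 := by
      intro j
      induction j with
      | zero => rfl
      | succ j ih => rw [negCount_succ, ih, hW]; cases j <;> simp_all
    rw [hcount, hW]
    cases j <;> simp
  · have hW := wMax_of_neg_last_of_neg_first σ hk htop hbot
    have hcount : ∀ j, negCount σ (wMax hk σ) j = j := by
      intro j
      induction j with
      | zero => rfl
      | succ j ih => rw [negCount_succ, ih, hW]; by_cases hj : j % 2 = 0 <;> simp [hj, htop, hbot]
    rw [hcount, hW]
    simp [Nat.even_iff]

theorem sLt_wMax (hk : 0 < k) {x : Word k} (hx : x ≠ wMax hk σ) : sLt σ x (wMax hk σ) :=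
  sLt_of_forall_eq_ite σ hk (wMax_eq_ite σ hk) hx

end Words

section Letters

variable {k n : ℕ}

theorem hatStar_apply_of_succ (π : Equiv.Perm (Fin n)) {i j : Fin n} (hij : (i : ℕ) + 1 = j) :
    hatStar π (π i) = some (π j) := by
  have hi : (i : ℕ) ≠ n - 1 := by omega
  simp only [hatStar, Equiv.symm_apply_apply, dif_neg hi]
  congr 2
  exact Fin.ext hij

theorem hatStar_apply_last (π : Equiv.Perm (Fin n)) (hn : 0 < n) :
    hatStar π (π ⟨n - 1, by omega⟩) = none := by
  simp [hatStar]

theorem exists_hatStar_eq_some (π : Equiv.Perm (Fin n)) (hn : 0 < n) {q : Fin n}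
    (hq : q ≠ π ⟨n - 1, by omega⟩) : ∃ w, hatStar π q = some w := by
  refine ⟨_, dif_neg fun h => hq ?_⟩
  rw [← Equiv.apply_symm_apply π q]
  exact congrArg π (Fin.ext h)

theorem segLetter_spec (hk : 0 < k) {e : ℕ → ℕ} {v : ℕ} (h0 : e 0 ≤ v) (hv : v < e k) :
    e (segLetter hk e v) ≤ v ∧ v < e (segLetter hk e v + 1) := by
  have hmem : k - 1 ∈ {t : ℕ | v < e (t + 1)} := by
    simpa [Nat.sub_add_cancel hk] using hv
  have hval : (segLetter hk e v : ℕ) = sInf {t : ℕ | v < e (t + 1)} :=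
    min_eq_right (Nat.sInf_le hmem)
  rw [hval]
  refine ⟨?_, Nat.sInf_mem ⟨_, hmem⟩⟩
  rcases Nat.eq_zero_or_pos (sInf {t : ℕ | v < e (t + 1)}) with h | h
  · rwa [h]
  · have hnot := Nat.notMem_of_lt_sInf (Nat.sub_lt h one_pos)
    rwa [Set.mem_ofPred_eq, Nat.sub_add_cancel (Nat.one_le_of_lt h), not_lt] at hnot

theorem segLetter_mono (hk : 0 < k) {e : ℕ → ℕ} {v v' : ℕ} (hv' : v' < e k) (h : v ≤ v') :
    segLetter hk e v ≤ segLetter hk e v' := by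
  have hmem : k - 1 ∈ {t : ℕ | v' < e (t + 1)} := by
    simpa [Nat.sub_add_cancel hk] using hv'
  have hle : sInf {t : ℕ | v < e (t + 1)} ≤ sInf {t : ℕ | v' < e (t + 1)} :=
    Nat.sInf_le (lt_of_le_of_lt h (Nat.sInf_mem ⟨_, hmem⟩))
  exact Fin.le_def.mpr (min_le_min_left _ hle)

end Letters

section Segmentation

variable {k n : ℕ} {σ : Fin k → Bool} {π : Equiv.Perm (Fin n)} {e : ℕ → ℕ} {s : Word k}

theorem IsStarSeg.lt_of_pos (hseg : IsStarSeg σ π e) {t : Fin k} (hσ : σ t = true)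
    {p q : Fin n} (hp : e t ≤ p) (hq : (q : ℕ) < e (t + 1)) (hpq : p < q) {v w : Fin n}
    (hv : hatStar π p = some v) (hw : hatStar π q = some w) : v < w := by
  simpa [hσ] using hseg.2.2.2.1 t p q hp hq hpq v w hv hw

theorem IsStarSeg.lt_of_neg (hseg : IsStarSeg σ π e) {t : Fin k} (hσ : σ t = false)
    {p q : Fin n} (hp : e t ≤ p) (hq : (q : ℕ) < e (t + 1)) (hpq : p < q) {v w : Fin n}
    (hv : hatStar π p = some v) (hw : hatStar π q = some w) : w < v := by
  simpa [hσ] using hseg.2.2.2.1 t p q hp hq hpq v w hv hw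

/-- Condition (c) at work: the letter of `π_{n-1}` is not `k - 1`. -/
theorem IsStarSeg.penultimate_lt_of_pos (hseg : IsStarSeg σ π e) (hk : 0 < k) (hn : 2 ≤ n)
    (hlast : π ⟨n - 1, by omega⟩ = ⟨n - 1, by omega⟩) (hσ : σ ⟨k - 1, by omega⟩ = true) :
    (π ⟨n - 2, by omega⟩ : ℕ) < e (k - 1) := by
  obtain ⟨-, hek, -, -, -, hc, -, -⟩ := id hseg
  set p := π ⟨n - 2, by omega⟩ with hp_def
  by_contra! hge
  have hp_ne : (p : ℕ) ≠ n - 1 := fun h =>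
    absurd (congrArg Fin.val (π.injective ((Fin.ext h).trans hlast.symm))) (by simp; omega)
  have hp_succ : hatStar π p = some ⟨n - 1, by omega⟩ := by
    rw [hp_def, hatStar_apply_of_succ π (j := ⟨n - 1, by omega⟩) (by simp; omega), hlast]
  -- In the increasing last block the value `n - 1` can only sit at its last non-`*` position.
  have hp_eq : (p : ℕ) = n - 2 := by
    by_contra hne
    obtain ⟨w, hw⟩ := exists_hatStar_eq_some π (by omega) (q := ⟨p + 1, by omega⟩)
      (by rw [hlast]; simp [Fin.ext_iff]; omega)
    have hlt := IsStarSeg.lt_of_pos hseg hσ hge (by simp [Nat.sub_add_cancel hk, hek]; omega)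
      (Fin.lt_def.mpr (Nat.lt_succ_self _)) hp_succ hw
    exact absurd w.isLt (by have := Fin.lt_def.mp hlt; simp at this; omega)
  have hlast_star : hatStar π ⟨n - 1, by omega⟩ = none := by
    rw [← hlast]; exact hatStar_apply_last π (by omega)
  have := hc (by omega) (by omega) (by omega) hσ
    (by rwa [← (Fin.ext hp_eq : p = ⟨n - 2, by omega⟩)]) hlast_star
  omega

/-- Condition (d) at work: if the letter of `π_{n-1}` is `0`, that of `π_{n-2}` is not `k - 1`. -/
theorem IsStarSeg.antepenultimate_lt_of_neg (hseg : IsStarSeg σ π e) (hk : 0 < k) (hn : 3 ≤ n)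
    (hlast : π ⟨n - 1, by omega⟩ = ⟨n - 1, by omega⟩) (hσ0 : σ ⟨0, hk⟩ = false)
    (hσ1 : σ ⟨k - 1, by omega⟩ = false) (hp : (π ⟨n - 2, by omega⟩ : ℕ) < e 1) :
    (π ⟨n - 3, by omega⟩ : ℕ) < e (k - 1) := by
  obtain ⟨he0, hek, -, -, -, -, hd, -⟩ := id hseg
  set p := π ⟨n - 2, by omega⟩ with hp_def
  set q := π ⟨n - 3, by omega⟩ with hq_def
  by_contra! hge
  have hq_ne : (q : ℕ) ≠ n - 1 := fun h =>
    absurd (congrArg Fin.val (π.injective ((Fin.ext h).trans hlast.symm))) (by simp; omega)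
  have hp_succ : hatStar π p = some ⟨n - 1, by omega⟩ := by
    rw [hp_def, hatStar_apply_of_succ π (j := ⟨n - 1, by omega⟩) (by simp; omega), hlast]
  have hq_succ : hatStar π q = some p := hatStar_apply_of_succ π (by simp; omega)
  -- In the decreasing first block the value `n - 1` can only sit at its first position.
  have hp_eq : (p : ℕ) = 0 := by
    by_contra hne
    obtain ⟨w, hw⟩ := exists_hatStar_eq_some π (by omega) (q := ⟨p - 1, by omega⟩)
      (by rw [hlast]; simp [Fin.ext_iff]; omega)
    have hlt := IsStarSeg.lt_of_neg hseg hσ0 (p := ⟨p - 1, by omega⟩) (q := p)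
      (by simp [he0]) hp (Fin.lt_def.mpr (by simp; omega)) hw hp_succ
    exact absurd w.isLt (by have := Fin.lt_def.mp hlt; simp at this; omega)
  -- In the decreasing last block the value `0` can only sit at its last non-`*` position.
  have hq_eq : (q : ℕ) = n - 2 := by
    by_contra hne
    obtain ⟨w, hw⟩ := exists_hatStar_eq_some π (by omega) (q := ⟨q + 1, by omega⟩)
      (by rw [hlast]; simp [Fin.ext_iff]; omega)
    have hlt := IsStarSeg.lt_of_neg hseg hσ1 hge (by simp [Nat.sub_add_cancel hk, hek]; omega)
      (Fin.lt_def.mpr (Nat.lt_succ_self _)) hq_succ hw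
    exact absurd (Fin.lt_def.mp hlt) (by omega)
  have hlast_star : hatStar π ⟨n - 1, by omega⟩ = none := by
    rw [← hlast]; exact hatStar_apply_last π (by omega)
  have := hd hk (by omega) (by omega) (by omega) (by omega) hσ0 hσ1
    (by rwa [← (Fin.ext hp_eq : p = ⟨0, by omega⟩)])
    (by rw [← (Fin.ext hq_eq : q = ⟨n - 2, by omega⟩), hq_succ,
      (Fin.ext hp_eq : p = ⟨0, by omega⟩)]) hlast_star
  omega

theorem shiftW_ne_wMax (hseg : IsStarSeg σ π e) (hk : 2 ≤ k) (hn : 2 ≤ n)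
    (hlast : π ⟨n - 1, by omega⟩ = ⟨n - 1, by omega⟩)
    (hs : ∀ m (hm : m < n - 1), s m = segLetter (by omega) e (π ⟨m, by omega⟩))
    (htail : shiftW s (n - 1) = wMax (by omega) σ) {a : ℕ} (ha : a < n - 1) :
    shiftW s a ≠ wMax (by omega) σ := by
  intro heq
  have hk0 : 0 < k := by omega
  have hfrom : ∀ {b} j, shiftW s b = wMax hk0 σ → b ≤ j → s j = wMax hk0 σ (j - b) := by
    intro b j hb hj
    simpa only [shiftW, Nat.sub_add_cancel hj] using congrFun hb (j - b)
  have hW : wMax hk0 σ (n - 1 - a) = wMax hk0 σ 0 := by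
    rw [← hfrom (n - 1) heq ha.le, hfrom (n - 1) htail le_rfl, Nat.sub_self]
  have hletter : ∀ m (hm : m < n - 1), a ≤ m →
      e (wMax hk0 σ (m - a)) ≤ π ⟨m, by omega⟩ ∧
        (π ⟨m, by omega⟩ : ℕ) < e (wMax hk0 σ (m - a) + 1) := by
    intro m hm ham
    rw [← hfrom m heq ham, hs m hm]
    exact segLetter_spec hk0 (by rw [hseg.1]; omega) (by rw [hseg.2.1]; omega)
  have hbot_ne_top : (⟨0, hk0⟩ : Fin k) ≠ ⟨k - 1, by omega⟩ := by simp [Fin.ext_iff]; omega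
  by_cases htop : σ ⟨k - 1, by omega⟩ = true
  · have := (hletter (n - 2) (by omega) (by omega)).1
    rw [wMax_of_pos_last σ hk0 htop] at this
    exact absurd (IsStarSeg.penultimate_lt_of_pos hseg hk0 hn hlast htop) (not_lt.mpr this)
  by_cases hbot : σ ⟨0, hk0⟩ = true
  · rw [wMax_of_neg_last_of_pos_first σ hk0 htop hbot] at hW
    simp only [if_neg (show n - 1 - a ≠ 0 by omega)] at hW
    exact hbot_ne_top hW
  · have hW_alt := wMax_of_neg_last_of_neg_first σ hk0 htop hbot
    have hr : (n - 1 - a) % 2 = 0 := by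
      by_contra hr
      simp only [hW_alt, if_neg hr, Nat.zero_mod] at hW
      exact hbot_ne_top hW
    have h2 := (hletter (n - 2) (by omega) (by omega)).2
    have h3 := (hletter (n - 3) (by omega) (by omega)).1
    simp only [hW_alt, if_neg (show (n - 2 - a) % 2 ≠ 0 by omega)] at h2
    simp only [hW_alt, if_pos (show (n - 3 - a) % 2 = 0 by omega)] at h3
    exact absurd (IsStarSeg.antepenultimate_lt_of_neg hseg hk0 (by omega) hlast
      (by simpa using hbot) (by simpa using htop) h2) (not_lt.mpr h3)

theorem sLt_shiftW_of_lt (hseg : IsStarSeg σ π e) (hk : 2 ≤ k) (hn : 0 < n)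
    (hlast : π ⟨n - 1, by omega⟩ = ⟨n - 1, by omega⟩)
    (hs : ∀ m (hm : m < n - 1), s m = segLetter (by omega) e (π ⟨m, by omega⟩))
    (htail : shiftW s (n - 1) = wMax (by omega) σ) (a b : ℕ) (ha : a < n) (hb : b < n)
    (hab : π ⟨a, ha⟩ < π ⟨b, hb⟩) : sLt σ (shiftW s a) (shiftW s b) := by
  have hk0 : 0 < k := by omega
  have hπ_le : ∀ i, (π i : ℕ) ≤ n - 1 := fun i => Nat.le_sub_one_of_lt (π i).isLt
  have ha_last : a ≠ n - 1 := by
    rintro rfl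
    exact absurd (Fin.lt_def.mp hab) (by rw [hlast]; exact not_lt.mpr (hπ_le _))
  by_cases hb_last : b = n - 1
  · subst hb_last
    rw [htail]
    exact sLt_wMax σ hk0 (shiftW_ne_wMax hseg hk (by omega) hlast hs htail (by omega))
  have hsa : shiftW s a 0 = segLetter hk0 e (π ⟨a, ha⟩) := by
    simp only [shiftW, zero_add]; exact hs a (by omega)
  have hsb : shiftW s b 0 = segLetter hk0 e (π ⟨b, hb⟩) := by
    simp only [shiftW, zero_add]; exact hs b (by omega)
  have hbound : ∀ i, e 0 ≤ (π i : ℕ) ∧ (π i : ℕ) < e k := fun i => by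
    rw [hseg.1, hseg.2.1]; exact ⟨Nat.zero_le _, (π i).isLt⟩
  rcases (segLetter_mono hk0 (hbound _).2 hab.le).lt_or_eq with hlt | heq
  · exact sLt_of_head_lt σ (by rwa [hsa, hsb])
  -- Equal first letters: both positions lie in the same block, whose monotonicity
  -- transfers the comparison to the next shifts.
  have hpa := (segLetter_spec hk0 (hbound ⟨a, ha⟩).1 (hbound _).2).1
  have hpb := (segLetter_spec hk0 (hbound ⟨b, hb⟩).1 (hbound _).2).2
  rw [← heq] at hpb
  have hhead : shiftW s a 0 = shiftW s b 0 := by rw [hsa, hsb, heq]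
  have hnext : ∀ c (hc : c + 1 < n), hatStar π (π ⟨c, by omega⟩) = some (π ⟨c + 1, hc⟩) :=
    fun c hc => hatStar_apply_of_succ π rfl
  cases hσ : σ (segLetter hk0 e (π ⟨a, ha⟩))
  · have hnext_lt :=
      IsStarSeg.lt_of_neg hseg hσ hpa hpb hab (hnext a (by omega)) (hnext b (by omega))
    have ih := sLt_shiftW_of_lt hseg hk hn hlast hs htail (b + 1) (a + 1) _ _ hnext_lt
    rw [← shiftW_shiftW, ← shiftW_shiftW] at ih
    exact sLt_of_head_eq_of_neg σ hhead (by rwa [hsa]) ih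
  · have hnext_lt :=
      IsStarSeg.lt_of_pos hseg hσ hpa hpb hab (hnext a (by omega)) (hnext b (by omega))
    have ih := sLt_shiftW_of_lt hseg hk hn hlast hs htail (a + 1) (b + 1) _ _ hnext_lt
    rw [← shiftW_shiftW, ← shiftW_shiftW] at ih
    exact sLt_of_head_eq_of_pos σ hhead (by rwa [hsa]) ih
termination_by 2 * n - a - b

end Segmentation

end SignedShift

theorem allowed_of_last_eq_n (k n : ℕ) (hk : 2 ≤ k) (hn : 1 ≤ n)
    (σ : Fin k → Bool) (π : Equiv.Perm (Fin n))
    (hlast : (π ⟨n - 1, by omega⟩ : ℕ) = n - 1)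
    (hC : InCstar σ π) :
    π ∈ Allowed σ n := by
  obtain ⟨e, hseg⟩ := hC
  have hk0 : 0 < k := by omega
  set l := (monoWord hk0 e π).take (n - 1)
  have hlen : l.length = n - 1 := by simp [l, monoWord]
  have hs : ∀ m (hm : m < n - 1), appendW l (wMax hk0 σ) m = segLetter hk0 e (π ⟨m, by omega⟩) :=
    fun m hm => by rw [SignedShift.appendW_apply_of_lt l _ (hlen ▸ hm)]; simp [l, monoWord]
  have htail : shiftW (appendW l (wMax hk0 σ)) (n - 1) = wMax hk0 σ := by
    rw [← hlen, SignedShift.shiftW_appendW_length]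
  exact ⟨_, SignedShift.patIs_of_forall_lt σ fun i j hij =>
    SignedShift.sLt_shiftW_of_lt hseg hk hn (Fin.ext hlast) hs htail i j i.isLt j.isLt hij⟩
end

section
/- The permutation π = 591482637 ∈ S_9 is not an allowed pattern of the tent map, i.e. 591482637 ∉ A_9(Σ_{+−}). -/
/-!
Comparing two words of `≺_σ` with the same first letter amounts to comparing their tails, in
reverse order when that letter is negative. For the tent map and the orbit `x_i = shiftW s i`,
the order `x_2 ≺ x_5 ≺ x_7 ≺ x_3 ≺ x_0 ≺ x_6 ≺ x_8 ≺ x_4 ≺ x_1` prescribed by `591482637`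
therefore forces `s_5 s_6 s_7 s_8 = 0101` and `x_5 ≺ x_9 ≺ x_7`. Whenever `x_{a+2b}` lies strictly
between `x_a` and `x_{a+b}` and the first `b` letters of `x_a` and `x_{a+b}` agree, betweenness
passes to the successors and makes the three first letters equal at every step, so
`x_a = x_{a+b}`; here `x_5 = x_7`, a contradiction.
-/

section SignedShift

variable {k : ℕ} (σ : Fin k → Bool)

lemma negCount_congr {u v : Word k} {j : ℕ} (h : ∀ i < j, u i = v i) :
    negCount σ u j = negCount σ v j :=
  congrArg Finset.card <| Finset.filter_congr fun i hi => by rw [h i (Finset.mem_range.mp hi)]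

lemma negCount_succ (u : Word k) (j : ℕ) :
    negCount σ u (j + 1) = negCount σ (shiftW u 1) j + if σ (u 0) = false then 1 else 0 := by
  rw [negCount, negCount, Finset.card_filter, Finset.card_filter, Finset.sum_range_succ']
  rfl

variable {σ}

lemma sLt_irrefl (u : Word k) : ¬ sLt σ u u :=
  fun ⟨_, _, hne, _⟩ => hne rfl

lemma sLt.head_le {u v : Word k} (h : sLt σ u v) : u 0 ≤ v 0 := by
  obtain ⟨j, hpre, -, hc⟩ := h
  rcases Nat.eq_zero_or_pos j with rfl | hj
  · rcases hc with ⟨-, hlt⟩ | ⟨hodd, -⟩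
    · exact hlt.le
    · exact absurd (by simp [negCount]) hodd
  · exact (hpre 0 hj).le

lemma sLt.tail_of_pos {u v : Word k} (h : sLt σ u v) (h0 : u 0 = v 0) (hσ : σ (u 0) = true) :
    sLt σ (shiftW u 1) (shiftW v 1) := by
  obtain ⟨_ | j, hpre, hne, hc⟩ := h
  · exact absurd h0 hne
  refine ⟨j, fun i hi => hpre (i + 1) (by omega), hne, ?_⟩
  simp only [negCount_succ, hσ, Bool.true_eq_false, if_false, add_zero] at hc
  exact hc

lemma sLt.tail_of_neg {u v : Word k} (h : sLt σ u v) (h0 : u 0 = v 0) (hσ : σ (u 0) = false) :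
    sLt σ (shiftW v 1) (shiftW u 1) := by
  obtain ⟨_ | j, hpre, hne, hc⟩ := h
  · exact absurd h0 hne
  have hagree : ∀ i < j, shiftW u 1 i = shiftW v 1 i := fun i hi => hpre (i + 1) (by omega)
  refine ⟨j, fun i hi => (hagree i hi).symm, Ne.symm hne, ?_⟩
  rw [negCount_congr σ fun i hi => (hagree i hi).symm]
  simp only [negCount_succ, hσ, if_true, Nat.even_add_one, not_not] at hc
  tauto

lemma shiftW_zero_apply (s : Word k) (i : ℕ) : shiftW s i 0 = s i :=
  congrArg s (Nat.zero_add i)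

lemma shiftW_shiftW_one (s : Word k) (i : ℕ) : shiftW (shiftW s i) 1 = shiftW s (i + 1) :=
  funext fun m => congrArg s (by omega)

variable (σ) in
def IsBetween (u w v : Word k) : Prop :=
  (sLt σ u w ∧ sLt σ w v) ∨ (sLt σ v w ∧ sLt σ w u)

lemma IsBetween.head_eq {u w v : Word k} (h : IsBetween σ u w v) (h0 : u 0 = v 0) :
    w 0 = u 0 := by
  rcases h with ⟨huw, hwv⟩ | ⟨hvw, hwu⟩
  · exact le_antisymm (h0 ▸ hwv.head_le) huw.head_le
  · exact le_antisymm hwu.head_le (h0 ▸ hvw.head_le)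

lemma IsBetween.tail {u w v : Word k} (h : IsBetween σ u w v) (huw : u 0 = w 0)
    (hwv : w 0 = v 0) : IsBetween σ (shiftW u 1) (shiftW w 1) (shiftW v 1) := by
  have huv := huw.trans hwv
  cases hσ : σ (u 0)
  · have hσw : σ (w 0) = false := huw ▸ hσ
    have hσv : σ (v 0) = false := huv ▸ hσ
    rcases h with ⟨h₁, h₂⟩ | ⟨h₁, h₂⟩
    · exact Or.inr ⟨h₂.tail_of_neg hwv hσw, h₁.tail_of_neg huw hσ⟩
    · exact Or.inl ⟨h₂.tail_of_neg huw.symm hσw, h₁.tail_of_neg hwv.symm hσv⟩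
  · have hσw : σ (w 0) = true := huw ▸ hσ
    have hσv : σ (v 0) = true := huv ▸ hσ
    rcases h with ⟨h₁, h₂⟩ | ⟨h₁, h₂⟩
    · exact Or.inl ⟨h₁.tail_of_pos huw hσ, h₂.tail_of_pos hwv hσw⟩
    · exact Or.inr ⟨h₁.tail_of_pos hwv.symm hσv, h₂.tail_of_pos huw.symm hσw⟩

theorem shiftW_eq_of_isBetween {s : Word k} {a b : ℕ}
    (hagree : ∀ i < b, s (a + i) = s (a + b + i))
    (hbtw : IsBetween σ (shiftW s a) (shiftW s (a + 2 * b)) (shiftW s (a + b))) :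
    shiftW s a = shiftW s (a + b) := by
  rcases Nat.eq_zero_or_pos b with rfl | hb
  · rfl
  have key : ∀ m, IsBetween σ (shiftW s (a + m)) (shiftW s (a + 2 * b + m)) (shiftW s (a + b + m))
      ∧ s (a + m) = s (a + b + m) := by
    intro m
    induction m using Nat.strong_induction_on with
    | _ m ih =>
      have hbtw_m : IsBetween σ (shiftW s (a + m)) (shiftW s (a + 2 * b + m))
          (shiftW s (a + b + m)) := by
        cases m with
        | zero => simpa using hbtw
        | succ m =>
          obtain ⟨hbtw', hagree'⟩ := ih m (by omega)
          have huv : shiftW s (a + m) 0 = shiftW s (a + b + m) 0 := by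
            simpa only [shiftW_zero_apply] using hagree'
          have hw := hbtw'.head_eq huv
          simpa only [shiftW_shiftW_one, add_assoc] using hbtw'.tail hw.symm (hw.trans huv)
      refine ⟨hbtw_m, ?_⟩
      by_cases hm : m < b
      · exact hagree m hm
      obtain ⟨hbtw', hagree'⟩ := ih (m - b) (by omega)
      have hw := hbtw'.head_eq (by simpa only [shiftW_zero_apply] using hagree')
      simp only [shiftW_zero_apply] at hw
      rw [show a + 2 * b + (m - b) = a + b + m by omega] at hw
      rw [show a + b + (m - b) = a + m by omega] at hagree'
      rw [hw, hagree']
  funext i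
  simpa only [shiftW, add_comm] using (key i).2

lemma sLt.shiftW_succ_of_pos {s : Word k} {i j : ℕ} (h : sLt σ (shiftW s i) (shiftW s j))
    (hij : s i = s j) (hσ : σ (s i) = true) :
    sLt σ (shiftW s (i + 1)) (shiftW s (j + 1)) := by
  simpa only [shiftW_shiftW_one] using
    h.tail_of_pos (by simpa only [shiftW_zero_apply] using hij) (by rwa [shiftW_zero_apply])

lemma sLt.shiftW_succ_of_neg {s : Word k} {i j : ℕ} (h : sLt σ (shiftW s i) (shiftW s j))
    (hij : s i = s j) (hσ : σ (s i) = false) :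
    sLt σ (shiftW s (j + 1)) (shiftW s (i + 1)) := by
  simpa only [shiftW_shiftW_one] using
    h.tail_of_neg (by simpa only [shiftW_zero_apply] using hij) (by rwa [shiftW_zero_apply])

lemma sLt.shiftW_head_le {s : Word k} {i j : ℕ} (h : sLt σ (shiftW s i) (shiftW s j)) :
    s i ≤ s j := by
  simpa only [shiftW_zero_apply] using h.head_le

end SignedShift

theorem not_allowed_591482637 :
    Equiv.ofBijective (![4, 8, 0, 3, 7, 1, 5, 2, 6] : Fin 9 → Fin 9) (by decide)
      ∉ Allowed (![true, false] : Fin 2 → Bool) 9 := by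
  rintro ⟨s, hs⟩
  set σ : Fin 2 → Bool := ![true, false]
  have h57 : sLt σ (shiftW s 5) (shiftW s 7) := (hs 5 7).mp (by decide)
  have h73 : sLt σ (shiftW s 7) (shiftW s 3) := (hs 7 3).mp (by decide)
  have h06 : sLt σ (shiftW s 0) (shiftW s 6) := (hs 0 6).mp (by decide)
  have h68 : sLt σ (shiftW s 6) (shiftW s 8) := (hs 6 8).mp (by decide)
  have h84 : sLt σ (shiftW s 8) (shiftW s 4) := (hs 8 4).mp (by decide)
  have n48 : ¬ sLt σ (shiftW s 4) (shiftW s 8) := fun h => absurd ((hs 4 8).mpr h) (by decide)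
  have n17 : ¬ sLt σ (shiftW s 1) (shiftW s 7) := fun h => absurd ((hs 1 7).mpr h) (by decide)
  have s7 : s 7 = 0 := by
    by_contra h7
    have h37 : s 7 = s 3 := by have := h73.shiftW_head_le; grind
    exact n48 (h73.shiftW_succ_of_neg h37 (by rw [show s 7 = 1 by grind]; rfl))
  have s5 : s 5 = 0 := by have := h57.shiftW_head_le; grind
  have s6 : s 6 = 1 := by
    by_contra h6
    have h06' : s 0 = s 6 := by have := h06.shiftW_head_le; grind
    exact n17 (h06.shiftW_succ_of_pos h06' (by rw [show s 0 = 0 by grind]; rfl))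
  have s8 : s 8 = 1 := by have := h68.shiftW_head_le; grind
  have s4 : s 4 = 1 := by have := h84.shiftW_head_le; grind
  have hbtw : IsBetween σ (shiftW s 5) (shiftW s 9) (shiftW s 7) :=
    Or.inl ⟨h84.shiftW_succ_of_neg (s8.trans s4.symm) (by rw [s8]; rfl),
      h68.shiftW_succ_of_neg (s6.trans s8.symm) (by rw [s6]; rfl)⟩
  have hper : shiftW s 5 = shiftW s (5 + 2) := by
    refine shiftW_eq_of_isBetween (fun i hi => ?_) hbtw
    interval_cases i <;> simp only [s5, s6, s7, s8, Nat.reduceAdd]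
  exact sLt_irrefl _ (hper ▸ h57)
end
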